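/- The theta function ϑ_4 of the quartic del Pezzo surface is obtained from the initial monomial y^{-1} by crossing the wall with function 1+t^{2H-E_1-E_2-E_3-E_4}xy^2, followed by the wall with function 1+t^{H-E_1-E_4}xy along a ray carrying the kink E_1 (which contributes the factors t^{±E_1}): for any field homomorphisms σ_6, σ_7 : K → K fixing ℂ(t_H, t_1, …, t_5) pointwise and satisfying σ_6(x) = x(1+t^{2H-E_1-E_2-E_3-E_4}xy^2)^2, σ_6(y) = y(1+t^{2H-E_1-E_2-E_3-E_4}xy^2)^{-1}, σ_7(x) = t^{E_1} x (1+t^{H-E_1-E_4}xy), σ_7(y) = t^{-E_1} y (1+t^{H-E_1-E_4}xy)^{-1}, one has σ_7(σ_6(y^{-1})) = ϑ_4. -/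

import Mathlib

set_option synthInstance.maxHeartbeats 1000000
set_option maxHeartbeats 2000000


noncomputable section

/-- `K = ℂ(t_H, t₁, t₂, t₃, t₄, t₅, x, y)`, the field of rational functions in eight
variables over `ℂ` (index 0 is `t_H`, indices 1–5 are `t₁,…,t₅`, index 6 is `x`,
index 7 is `y`). -/
abbrev Kdp : Type := FractionRing (MvPolynomial (Fin 8) ℂ)

/-- The `i`-th variable, as an element of `K`. -/
def vK (i : Fin 8) : Kdp :=
  algebraMap (MvPolynomial (Fin 8) ℂ) Kdp (MvPolynomial.X i)

/-- The monomial `t^{aH + b₁E₁ + ⋯ + b₅E₅} = t_H^a t₁^{b₁} ⋯ t₅^{b₅} ∈ K`. -/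
def tK (a b1 b2 b3 b4 b5 : ℤ) : Kdp :=
  vK 0 ^ a * vK 1 ^ b1 * vK 2 ^ b2 * vK 3 ^ b3 * vK 4 ^ b4 * vK 5 ^ b5

/-- `x ∈ K`. -/
def xK : Kdp := vK 6

/-- `y ∈ K`. -/
def yK : Kdp := vK 7

/-- The subfield `ℂ(t_H, t₁, …, t₅) ⊆ K`. -/
def Ft : Subfield Kdp :=
  Subfield.closure (Set.range (algebraMap ℂ Kdp) ∪ {vK 0, vK 1, vK 2, vK 3, vK 4, vK 5})

/-- `ϑ₁ = x⁻¹y⁻¹ + t^{E₁-E₅} x⁻¹y⁻² + t^{H-E₄-E₅} y⁻¹ ∈ K`. -/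
def θK₁ : Kdp :=
  xK⁻¹ * yK⁻¹ + tK 0 1 0 0 0 (-1) * xK⁻¹ * yK ^ (-2 : ℤ) + tK 1 0 0 0 (-1) (-1) * yK⁻¹

/-- `ϑ₂ = x⁻¹ + t^{H-E₁-E₃} y + t^{E₁-E₅} x⁻¹y⁻¹ ∈ K`. -/
def θK₂ : Kdp :=
  xK⁻¹ + tK 1 (-1) 0 (-1) 0 0 * yK + tK 0 1 0 0 0 (-1) * xK⁻¹ * yK⁻¹

/-- `ϑ₃ = t^{H-E₁} xy + t^{2H-2E₁-E₂-E₃} xy² + t^{H-E₁-E₂} y ∈ K`. -/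
def θK₃ : Kdp :=
  tK 1 (-1) 0 0 0 0 * xK * yK + tK 2 (-2) (-1) (-1) 0 0 * xK * yK ^ 2
    + tK 1 (-1) (-1) 0 0 0 * yK

/-- `ϑ₄ = t^{E₁} y⁻¹ + t^{H-E₄} x + t^{2H-E₁-E₂-E₃-E₄} xy ∈ K`. -/
def θK₄ : Kdp :=
  tK 0 1 0 0 0 0 * yK⁻¹ + tK 1 0 0 0 (-1) 0 * xK + tK 2 (-1) (-1) (-1) (-1) 0 * xK * yK

lemma vK_ne (i : Fin 8) : vK i ≠ 0 := by
  simp only [vK, ne_eq, IsFractionRing.to_map_eq_zero_iff]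
  exact MvPolynomial.X_ne_zero i

lemma vK_mem (i : Fin 8) (hi : (i : ℕ) ≤ 5) : vK i ∈ Ft := by
  apply Subfield.subset_closure
  right
  fin_cases i <;> simp_all

lemma tK_mem (a b1 b2 b3 b4 b5 : ℤ) : tK a b1 b2 b3 b4 b5 ∈ Ft := by
  refine mul_mem (mul_mem (mul_mem (mul_mem (mul_mem ?_ ?_) ?_) ?_) ?_) ?_ <;>
    exact zpow_mem (vK_mem _ (by decide)) _

lemma poly_ne : (MvPolynomial.X 1 * MvPolynomial.X 4 +
    MvPolynomial.X 0 * MvPolynomial.X 6 * MvPolynomial.X 7 : MvPolynomial (Fin 8) ℂ) ≠ 0 := by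
  intro h
  have := congrArg (MvPolynomial.eval fun _ => (1:ℂ)) h
  simp at this

lemma oneB_ne : (1 + tK 1 (-1) 0 0 (-1) 0 * xK * yK) ≠ 0 := by
  have key : (vK 1 * vK 4) * (1 + tK 1 (-1) 0 0 (-1) 0 * xK * yK)
      = algebraMap (MvPolynomial (Fin 8) ℂ) Kdp
        (MvPolynomial.X 1 * MvPolynomial.X 4 +
          MvPolynomial.X 0 * MvPolynomial.X 6 * MvPolynomial.X 7) := by
    rw [RingHom.map_add, RingHom.map_mul, RingHom.map_mul, RingHom.map_mul]
    simp only [tK, xK, yK, zpow_neg, zpow_one, zpow_zero]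
    show _ = vK 1 * vK 4 + vK 0 * vK 6 * vK 7
    field_simp [vK_ne]
  intro h
  rw [h, mul_zero] at key
  exact poly_ne ((IsFractionRing.to_map_eq_zero_iff).mp key.symm)

/-- `ϑ₄` is obtained from the initial monomial `y⁻¹` by crossing the wall with
function `1+t^{2H-E₁-E₂-E₃-E₄}xy²`, followed by the wall with function
`1+t^{H-E₁-E₄}xy` along a ray carrying the kink `E₁` (contributing the
factors `t^{±E₁}`). -/
theorem theta_four_from_wall_crossing (σ₆ σ₇ : Kdp →+* Kdp)
    (hσ₆fix : ∀ z ∈ Ft, σ₆ z = z) (hσ₇fix : ∀ z ∈ Ft, σ₇ z = z)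
    (hσ₆x : σ₆ xK = xK * (1 + tK 2 (-1) (-1) (-1) (-1) 0 * xK * yK ^ 2) ^ 2)
    (hσ₆y : σ₆ yK = yK * (1 + tK 2 (-1) (-1) (-1) (-1) 0 * xK * yK ^ 2)⁻¹)
    (hσ₇x : σ₇ xK = tK 0 1 0 0 0 0 * xK * (1 + tK 1 (-1) 0 0 (-1) 0 * xK * yK))
    (hσ₇y : σ₇ yK = tK 0 (-1) 0 0 0 0 * yK * (1 + tK 1 (-1) 0 0 (-1) 0 * xK * yK)⁻¹) :
    σ₇ (σ₆ yK⁻¹) = θK₄ := by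
  have h1 : σ₆ yK⁻¹ = yK⁻¹ * (1 + tK 2 (-1) (-1) (-1) (-1) 0 * xK * yK ^ 2) := by
    rw [map_inv₀, hσ₆y, mul_inv, inv_inv]
  rw [h1, map_mul, map_inv₀, map_add, map_one, map_mul, map_mul, map_pow, hσ₇x, hσ₇y,
    hσ₇fix _ (tK_mem 2 (-1) (-1) (-1) (-1) 0)]
  have main : ∀ w : Kdp, w ≠ 0 →
      (tK 0 (-1) 0 0 0 0 * yK * w⁻¹)⁻¹ *
        (1 + tK 2 (-1) (-1) (-1) (-1) 0 * (tK 0 1 0 0 0 0 * xK * w) *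
          (tK 0 (-1) 0 0 0 0 * yK * w⁻¹) ^ 2)
      = tK 0 1 0 0 0 0 * yK⁻¹ * w + tK 2 (-1) (-1) (-1) (-1) 0 * xK * yK := by
    intro w hw
    have h1 := vK_ne 1; have h2 := vK_ne 2; have h3 := vK_ne 3
    have h4 := vK_ne 4; have hy := vK_ne 7
    simp only [tK, xK, yK, zpow_neg, zpow_one, zpow_zero, zpow_two, one_mul, mul_one]
    have e1 : ((vK 1)⁻¹ * vK 7 * w⁻¹)⁻¹ = vK 1 * (vK 7)⁻¹ * w :=
      inv_eq_of_mul_eq_one_right (by field_simp)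
    rw [mul_add, mul_one, e1]
    congr 1
    field_simp [inv_pow]
  rw [main _ oneB_ne]
  have h1 := vK_ne 1; have h2 := vK_ne 2; have h3 := vK_ne 3
  have h4 := vK_ne 4; have hy := vK_ne 7
  simp only [θK₄, tK, xK, yK, zpow_neg, zpow_one, zpow_zero, zpow_two, one_mul, mul_one]
  rw [mul_add, mul_one]
  congr 1
  congr 1
  field_simp [inv_pow]

end
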